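/- arXiv:1903.05876 — 3 statements merged into one kernel-verified Lean document; each statement's English description precedes it below -/
import Mathlib

section
/- Let F be a free group of finite rank n (the free group on a set with n elements) and let H be a subgroup of F which is an elementary substructure of F in the first-order language of groups. Then H is finitely generated; more precisely, H is generated by at most n elements. -/
open FirstOrder Monoid

/-- The functions of the first-order language of groups:
multiplication (binary), inversion (unary), identity (constant). -/
inductive GroupFunc : ℕ → Type
  | mul : GroupFunc 2
  | inv : GroupFunc 1
  | one : GroupFunc 0

/-- The first-order language of groups. -/
def groupLang : FirstOrder.Language where
  Functions := GroupFunc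
  Relations := fun _ => Empty

/-- Every group is a structure for the language of groups in the standard way. -/
instance groupStructure (G : Type*) [Group G] : groupLang.Structure G where
  funMap {_} f v :=
    match f with
    | .mul => v 0 * v 1
    | .inv => (v 0)⁻¹
    | .one => 1
  RelMap {_} r := r.elim

/-- A subgroup `H` of `G` is an elementary subgroup if every first-order formula of the
language of groups holds of a tuple from `H` in `H` iff it holds in `G`. -/
def IsElementarySubgroup {G : Type*} [Group G] (H : Subgroup G) : Prop :=
  ∀ (n : ℕ) (φ : groupLang.Formula (Fin n)) (v : Fin n → H),
    φ.Realize v ↔ φ.Realize (fun i => (v i : G))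

/-- A subgroup `H` of `F` is a free factor if there is a subgroup `K` such that the canonical
homomorphism `H ∗ K → F` induced by the two inclusions is an isomorphism. -/
def IsFreeFactor {F : Type*} [Group F] (H : Subgroup F) : Prop :=
  ∃ K : Subgroup F, Function.Bijective (Coprod.lift H.subtype K.subtype)
/-!
By Nielsen–Schreier `H` is free. Since every element of `F` is a group word in `n` generators,
any `n + 1` elements `x₀, …, xₙ` of `H` satisfy in `F` the formula `∃ y₁ … yₙ, ⋀ᵢ xᵢ = wᵢ(y)`;
by elementarity they lie in a subgroup of `H` generated by `n` elements. If the `xᵢ` were part of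
a basis of `H`, retracting `H` onto the free group on them would make `FreeGroup (Fin (n + 1))`
generated by `n` elements, which is impossible after abelianizing to `ℤⁿ⁺¹`. So a basis of `H`
has at most `n` elements.
-/

open Subgroup Set

namespace FirstOrder.Language

variable {L : Language} {β : Type*} [Finite β] {n : ℕ}

noncomputable def Formula.memRangeTerms (t : β → L.Term (Fin n)) : L.Formula β :=
  (BoundedFormula.iInf fun j => (Term.var (Sum.inl j)).bdEqual ((t j).relabel Sum.inr)).exs

theorem Formula.realize_memRangeTerms {M : Type*} [L.Structure M] (t : β → L.Term (Fin n))
    (v : β → M) :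
    (memRangeTerms t).Realize v ↔ ∃ x : Fin n → M, ∀ j, v j = (t j).realize x := by
  rw [memRangeTerms, BoundedFormula.realize_exs]
  simp only [BoundedFormula.realize_iInf, BoundedFormula.realize_bdEqual, Term.realize_var,
    Term.realize_relabel, Sum.elim_inl, Sum.elim_comp_inr]

end FirstOrder.Language

open FirstOrder.Language

theorem groupLang.mem_closure_range_iff {G : Type*} [Group G] {α : Type*} (v : α → G) (u : G) :
    u ∈ closure (range v) ↔ ∃ t : groupLang.Term α, t.realize v = u := by
  constructor
  · intro hu
    induction hu using closure_induction with
    | mem x hx =>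
      obtain ⟨i, rfl⟩ := hx
      exact ⟨Term.var i, rfl⟩
    | one => exact ⟨Term.func GroupFunc.one ![], rfl⟩
    | mul x y _ _ hx hy =>
      obtain ⟨t₁, rfl⟩ := hx
      obtain ⟨t₂, rfl⟩ := hy
      exact ⟨Term.func GroupFunc.mul ![t₁, t₂], rfl⟩
    | inv x _ hx =>
      obtain ⟨t, rfl⟩ := hx
      exact ⟨Term.func GroupFunc.inv ![t], rfl⟩
  · rintro ⟨t, rfl⟩
    induction t with
    | var i => exact subset_closure (mem_range_self i)
    | func f ts ih =>
      cases f with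
      | mul => exact mul_mem (ih 0) (ih 1)
      | inv => exact inv_mem (ih 0)
      | one => exact one_mem _

theorem IsElementarySubgroup.exists_range_subset_closure {G : Type*} [Group G]
    {H : Subgroup G} (hH : IsElementarySubgroup H) {n : ℕ} {a : Fin n → G}
    (ha : closure (range a) = ⊤) {m : ℕ} (u : Fin m → H) :
    ∃ b : Fin n → H, range u ⊆ closure (range b) := by
  choose t ht using fun j => (groupLang.mem_closure_range_iff a (u j : G)).1 (ha ▸ mem_top _)
  have hG : (Formula.memRangeTerms t).Realize fun j => (u j : G) :=
    (Formula.realize_memRangeTerms t _).2 ⟨a, fun j => (ht j).symm⟩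
  obtain ⟨b, hb⟩ := (Formula.realize_memRangeTerms t u).1 ((hH m _ u).2 hG)
  refine ⟨b, range_subset_iff.2 fun j => ?_⟩
  rw [hb j]
  exact (groupLang.mem_closure_range_iff b _).2 ⟨t j, rfl⟩

theorem Subgroup.closure_range_comp_eq_top {G K ι : Type*} [Group G] [Group K] {g : ι → G}
    (hg : closure (range g) = ⊤) (φ : G →* K) (hφ : Function.Surjective φ) :
    closure (range (φ ∘ g)) = ⊤ := by
  rw [range_comp, ← MonoidHom.map_closure, hg, map_top_of_surjective _ hφ]

theorem FreeGroup.card_le_of_closure_range_eq_top {ι κ : Type*} [Fintype ι] [Fintype κ]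
    (g : κ → FreeGroup ι) (hg : closure (range g) = ⊤) : Fintype.card ι ≤ Fintype.card κ := by
  classical
  let φ : FreeGroup ι →* Multiplicative (ι → ℤ) := FreeGroup.lift fun i => .ofAdd (Pi.single i 1)
  let S := Submodule.span ℤ (range fun k => (φ (g k)).toAdd)
  have hφS : ∀ x, (φ x).toAdd ∈ S := by
    suffices closure (range g) ≤ S.toAddSubgroup.toSubgroup.comap φ from
      fun x => this (hg ▸ mem_top x)
    rw [closure_le]
    rintro _ ⟨k, rfl⟩
    exact Submodule.subset_span ⟨k, rfl⟩
  have hS : S = ⊤ := by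
    refine eq_top_iff.2 ((Pi.basisFun ℤ ι).span_eq.ge.trans (Submodule.span_le.2 ?_))
    rintro _ ⟨i, rfl⟩
    simpa [φ] using hφS (FreeGroup.of i)
  calc Fintype.card ι = Module.finrank ℤ (ι → ℤ) := (Module.finrank_pi ℤ).symm
    _ = Module.finrank ℤ S := by rw [hS, finrank_top]
    _ ≤ Fintype.card κ := finrank_range_le_card _

theorem finite_and_natCard_le_of_isEmpty_embedding {X : Type*} {n : ℕ}
    (h : IsEmpty (Fin (n + 1) ↪ X)) : Finite X ∧ Nat.card X ≤ n := by
  have : Finite X := by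
    by_contra hX
    rw [not_finite_iff_infinite] at hX
    exact h.false (Fin.valEmbedding.trans (Infinite.natEmbedding X))
  refine ⟨this, not_lt.1 fun hn => ?_⟩
  cases nonempty_fintype X
  rw [Nat.card_eq_fintype_card] at hn
  exact h.false (Function.Embedding.nonempty_of_card_le (by simpa using hn)).some

namespace IsFreeGroup

variable {G : Type*} [Group G] [IsFreeGroup G]

theorem closure_range_of : closure (range (of : Generators G → G)) = ⊤ :=
  closure_range_comp_eq_top (FreeGroup.closure_range_of _) (mulEquiv G).toMonoidHom
    (mulEquiv G).surjective

theorem card_le_of_range_of_subset_closure {ι κ : Type*} [Fintype ι] [Fintype κ]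
    (f : ι ↪ Generators G) (b : κ → G) (h : range (of ∘ f) ⊆ closure (range b)) :
    Fintype.card ι ≤ Fintype.card κ := by
  let ρ : G →* FreeGroup ι := lift (Function.extend f FreeGroup.of 1)
  have hρ : ∀ i, ρ (of (f i)) = FreeGroup.of i := fun i => by
    simp only [ρ, lift_of, f.injective.extend_apply]
  refine FreeGroup.card_le_of_closure_range_eq_top (ρ ∘ b) (eq_top_iff.2 ?_)
  rw [← FreeGroup.closure_range_of, closure_le, range_comp, ← MonoidHom.map_closure]
  rintro _ ⟨i, rfl⟩
  exact hρ i ▸ mem_map_of_mem ρ (h (mem_range_self i))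

theorem exists_finset_card_le_closure_eq_top {n : ℕ}
    (h : ∀ u : Fin (n + 1) → G, ∃ b : Fin n → G, range u ⊆ closure (range b)) :
    ∃ s : Finset G, s.card ≤ n ∧ closure (s : Set G) = ⊤ := by
  classical
  have hX : IsEmpty (Fin (n + 1) ↪ Generators G) := ⟨fun f => by
    obtain ⟨b, hb⟩ := h (of ∘ f)
    simpa using card_le_of_range_of_subset_closure f b hb⟩
  obtain ⟨_, hcard⟩ := finite_and_natCard_le_of_isEmpty_embedding hX
  cases nonempty_fintype (Generators G)
  refine ⟨Finset.univ.image of, Finset.card_image_le.trans ?_, ?_⟩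
  · rwa [Finset.card_univ, ← Nat.card_eq_fintype_card]
  · rw [Finset.coe_image, Finset.coe_univ, image_univ, closure_range_of]

end IsFreeGroup

theorem elementary_subgroup_generated_by_at_most_rank_many_elements
    {n : ℕ} {F : Type*} [Group F] (e : F ≃* FreeGroup (Fin n))
    (H : Subgroup F) (hH : IsElementarySubgroup H) :
    ∃ s : Finset F, s.card ≤ n ∧ Subgroup.closure (s : Set F) = H := by
  have : IsFreeGroup F := .ofMulEquiv e.symm
  have hgen := closure_range_comp_eq_top (FreeGroup.closure_range_of _) e.symm.toMonoidHom
    e.symm.surjective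
  -- `IsFreeGroup H` is the Nielsen–Schreier theorem, `subgroupIsFreeOfIsFree`.
  obtain ⟨s, hs, hsH⟩ := IsFreeGroup.exists_finset_card_le_closure_eq_top (G := H)
    (hH.exists_range_subset_closure hgen)
  refine ⟨s.map (.subtype _), (Finset.card_map _).trans_le hs, ?_⟩
  rw [Finset.coe_map, Function.Embedding.coe_subtype, ← H.coe_subtype, ← MonoidHom.map_closure,
    hsH, ← MonoidHom.range_eq_map, range_subtype]
end

section
/- Let F be the free group on two generators a, b, and let w = a·[a,b] = a·(a b a⁻¹ b⁻¹). Then the cyclic subgroup ⟨w⟩ generated by w is a retract of F (there exists a group homomorphism r : F → F with image contained in ⟨w⟩ and r(w) = w), but ⟨w⟩ is not a free factor of F. -/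
open FirstOrder Monoid

/-!
Sending `a ↦ 1`, `b ↦ 0` to `ℤ` maps `w` to `1`, so `n ↦ wⁿ` composed with it is a retraction
onto `⟨w⟩`.

If `F = ⟨w⟩ ∗ K`, then, `w` having infinite order, a homomorphism `F → G` amounts to an
arbitrary image of `w` together with a homomorphism `K → G`. So for every finite group `G` all
fibres of the word map `(p, q) ↦ p [p, q]` on `G × G` have the same size `|Hom(K, G)|`. In the
dihedral group of order 6 the fibre over `1` has 12 elements and the fibre over a reflection 6.
-/

open Subgroup

section

variable {F G : Type*} [Group F] [Group G] {w : F}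

theorem exists_retraction_closure_singleton (χ : F →* Multiplicative ℤ)
    (hχ : χ w = .ofAdd 1) : ∃ r : F →* F, (∀ x, r x ∈ closure {w}) ∧ r w = w :=
  ⟨(zpowersHom F w).comp χ, fun _ => mem_closure_singleton.2 ⟨_, rfl⟩, by simp [hχ]⟩

noncomputable def closureSingletonMulEquiv (hw : ¬IsOfFinOrder w) :
    Multiplicative ℤ ≃* closure {w} :=
  MulEquiv.ofBijective ((zpowersHom F w).codRestrict _ fun _ => mem_closure_singleton.2 ⟨_, rfl⟩)
    ⟨fun _ _ h => injective_zpow_iff_not_isOfFinOrder.2 hw (congrArg Subtype.val h),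
      fun ⟨_, hx⟩ => (mem_closure_singleton.1 hx).imp fun _ hn => Subtype.ext hn⟩

noncomputable def closureSingletonHomEquiv (hw : ¬IsOfFinOrder w) : (closure {w} →* G) ≃ G :=
  (MulEquiv.monoidHomCongrLeftEquiv (closureSingletonMulEquiv hw).symm).trans (zpowersHom G).symm

theorem closureSingletonHomEquiv_apply (hw : ¬IsOfFinOrder w) (φ : closure {w} →* G) :
    closureSingletonHomEquiv hw φ = φ ⟨w, mem_closure_singleton_self w⟩ := by
  simp [closureSingletonHomEquiv, closureSingletonMulEquiv]

noncomputable def homEquivOfBijectiveCoprodLift (hw : ¬IsOfFinOrder w) {K : Subgroup F}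
    (hK : Function.Bijective (Coprod.lift (closure {w}).subtype K.subtype)) :
    (F →* G) ≃ G × (K →* G) :=
  (MulEquiv.monoidHomCongrLeftEquiv (MulEquiv.ofBijective _ hK)).symm.trans <|
    Coprod.liftEquiv.symm.trans <| (closureSingletonHomEquiv hw).prodCongr (Equiv.refl _)

theorem homEquivOfBijectiveCoprodLift_apply_fst (hw : ¬IsOfFinOrder w) {K : Subgroup F}
    (hK : Function.Bijective (Coprod.lift (closure {w}).subtype K.subtype)) (g : F →* G) :
    (homEquivOfBijectiveCoprodLift hw hK g).1 = g w := by
  simp [homEquivOfBijectiveCoprodLift, closureSingletonHomEquiv_apply, Coprod.liftEquiv]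

theorem IsFreeFactor.card_fiber_eq (hwF : IsFreeFactor (closure {w})) (hw : ¬IsOfFinOrder w)
    (x y : G) : Nat.card {g : F →* G // g w = x} = Nat.card {g : F →* G // g w = y} := by
  obtain ⟨K, hK⟩ := hwF
  have card_fiber (z : G) : Nat.card {g : F →* G // g w = z} = Nat.card (K →* G) :=
    calc Nat.card {g : F →* G // g w = z}
        = Nat.card {p : G × (K →* G) // p.1 = z} :=
          Nat.card_congr <| (homEquivOfBijectiveCoprodLift hw hK).subtypeEquiv fun _ => by
            rw [homEquivOfBijectiveCoprodLift_apply_fst]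
      _ = Nat.card (K →* G) := by
          rw [Nat.card_congr (Equiv.prodSubtypeFstEquivSubtypeProd (p := (· = z))), Nat.card_prod,
            Nat.card_unique, one_mul]
  rw [card_fiber, card_fiber]

end

theorem FreeGroup.card_fiber_fin_two {G : Type*} [Group G] (u : FreeGroup (Fin 2)) (x : G) :
    Nat.card {g : FreeGroup (Fin 2) →* G // g u = x} =
      Nat.card {pq : G × G // FreeGroup.lift ![pq.1, pq.2] u = x} :=
  (Nat.card_congr <| ((finTwoArrowEquiv G).symm.trans FreeGroup.lift).subtypeEquiv
    fun _ => Iff.rfl).symm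

theorem DihedralGroup.card_word_fiber_one_ne_card_word_fiber_sr :
    Nat.card {pq : DihedralGroup 3 × DihedralGroup 3 //
        pq.1 * (pq.1 * pq.2 * pq.1⁻¹ * pq.2⁻¹) = 1} ≠
      Nat.card {pq : DihedralGroup 3 × DihedralGroup 3 //
        pq.1 * (pq.1 * pq.2 * pq.1⁻¹ * pq.2⁻¹) = .sr 0} := by
  simp only [Nat.card_eq_fintype_card]
  decide

theorem retract_not_free_factor_example :
    let a : FreeGroup (Fin 2) := FreeGroup.of 0
    let b : FreeGroup (Fin 2) := FreeGroup.of 1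
    let w : FreeGroup (Fin 2) := a * (a * b * a⁻¹ * b⁻¹)
    (∃ r : FreeGroup (Fin 2) →* FreeGroup (Fin 2),
        (∀ x, r x ∈ Subgroup.closure {w}) ∧ r w = w) ∧
      ¬ IsFreeFactor (Subgroup.closure {w}) := by
  intro a b w
  let χ : FreeGroup (Fin 2) →* Multiplicative ℤ := FreeGroup.lift ![.ofAdd 1, 1]
  have hχ : χ w = .ofAdd 1 := by simp [χ, w, a, b]
  have hw : ¬IsOfFinOrder w :=
    not_isOfFinOrder_of_isMulTorsionFree fun h => by simpa [h] using hχ.symm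
  refine ⟨exists_retraction_closure_singleton χ hχ, fun hwF => ?_⟩
  have h := hwF.card_fiber_eq hw (1 : DihedralGroup 3) (.sr 0)
  rw [FreeGroup.card_fiber_fin_two, FreeGroup.card_fiber_fin_two] at h
  simp only [w, a, b, map_mul, map_inv, FreeGroup.lift_apply_of, Matrix.cons_val_zero,
    Matrix.cons_val_one, Matrix.cons_val_fin_one] at h
  exact DihedralGroup.card_word_fiber_one_ne_card_word_fiber_sr h
end

section
/- Let F be a free group and S a nonabelian subgroup of F. Then the centralizer of S in F is trivial: if g ∈ F satisfies g·s = s·g for all s ∈ S, then g = 1. -/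
open FirstOrder Monoid

/-!
By Nielsen–Schreier the centralizer `C` of `g` in `F` is again free. It contains `g` as a
central element and the two noncommuting elements of `S`, so `C` is a nonabelian free group,
with two distinct generators `a ≠ b`. A nontrivial reduced word `z` cannot commute with both:
take `c ∈ {a, b}` different from the generator of the first letter of `z`, and let `ℓ = c^{±1}`
carry the sign of the last letter of `z`. Then neither `ℓ z` nor `z ℓ` cancels, so `ℓ z = z ℓ`
would make `ℓ` the first letter of `z`.
-/

namespace FreeGroup

variable {α : Type*}

theorem toWord_mul_of_isReduced [DecidableEq α] {x y : FreeGroup α}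
    (h : IsReduced (x.toWord ++ y.toWord)) : (x * y).toWord = x.toWord ++ y.toWord := by
  rw [toWord_mul, h.reduce_eq]

theorem IsReduced.append_singleton {w : List (α × Bool)} (h : IsReduced w) (hw : w ≠ [])
    {ℓ : α × Bool} (hℓ : (w.getLast hw).2 = ℓ.2) : IsReduced (w ++ [ℓ]) := by
  rw [IsReduced, List.isChain_append]
  grind [IsReduced]

theorem commute_mk_singleton {z : FreeGroup α} {a : α} (h : Commute z (of a)) (b : Bool) :
    Commute z (mk [(a, b)]) := by
  cases b
  · exact h.inv_right
  · exact h

theorem eq_one_of_commute_of_ne {a b : α} (hab : a ≠ b) {z : FreeGroup α}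
    (ha : Commute z (of a)) (hb : Commute z (of b)) : z = 1 := by
  classical
  rcases hw : z.toWord with _ | ⟨x, w⟩
  · exact toWord_eq_nil_iff.mp hw
  obtain ⟨c, hc, hcx⟩ : ∃ c, Commute z (of c) ∧ c ≠ x.1 := by
    by_cases hax : a = x.1
    · exact ⟨b, hb, hax ▸ hab.symm⟩
    · exact ⟨a, ha, hax⟩
  have hred : IsReduced (x :: w) := hw ▸ isReduced_toWord
  set ℓ : α × Bool := (c, ((x :: w).getLast (List.cons_ne_nil x w)).2)
  have hleft : (mk [ℓ] * z).toWord = ℓ :: x :: w := by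
    rw [toWord_mul_of_isReduced] <;>
      simp only [hw, toWord_mk, reduce_singleton, List.singleton_append, isReduced_cons_cons]
    exact ⟨fun h => absurd h hcx, hred⟩
  have hright : (z * mk [ℓ]).toWord = x :: w ++ [ℓ] := by
    rw [toWord_mul_of_isReduced] <;> simp only [hw, toWord_mk, reduce_singleton]
    exact hred.append_singleton _ rfl
  have hcomm : ℓ :: x :: w = x :: w ++ [ℓ] := by
    rw [← hleft, ← (commute_mk_singleton hc ℓ.2).eq, hright]
  exact absurd (congrArg Prod.fst (List.cons_eq_cons.mp hcomm).1) hcx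

theorem commute_of_subsingleton [Subsingleton α] (x y : FreeGroup α) : Commute x y := by
  have commute_of : ∀ (a : α) (y : FreeGroup α), Commute (of a) y := fun a y => by
    induction y using FreeGroup.induction_on with
    | C1 => exact .one_right _
    | of b => rw [Subsingleton.elim a b]
    | inv_of b h => exact h.inv_right
    | mul y₁ y₂ h₁ h₂ => exact h₁.mul_right h₂
  induction x using FreeGroup.induction_on with
  | C1 => exact .one_left _
  | of a => exact commute_of a y
  | inv_of a h => exact h.inv_left
  | mul x₁ x₂ h₁ h₂ => exact h₁.mul_left h₂

end FreeGroup

theorem IsFreeGroup.center_eq_bot {G : Type*} [Group G] [IsFreeGroup G] {x y : G}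
    (hxy : ¬Commute x y) : Subgroup.center G = ⊥ := by
  let e := IsFreeGroup.toFreeGroup G
  obtain ⟨a, b, hab⟩ : ∃ a b : IsFreeGroup.Generators G, a ≠ b := by
    by_contra! h
    have : Subsingleton (IsFreeGroup.Generators G) := ⟨h⟩
    exact hxy (by simpa using (FreeGroup.commute_of_subsingleton (e x) (e y)).map e.symm)
  refine (Subgroup.eq_bot_iff_forall _).mpr fun z hz => ?_
  have commute_of : ∀ c, Commute (e z) (FreeGroup.of c) := fun c => by
    simpa using (Commute.map (Subgroup.mem_center_iff.mp hz (e.symm (.of c))) e).symm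
  simpa using congrArg e.symm (FreeGroup.eq_one_of_commute_of_ne hab (commute_of a) (commute_of b))

theorem centralizer_of_nonabelian_subgroup_trivial
    {F : Type*} [Group F] [IsFreeGroup F] (S : Subgroup F)
    (hS : ∃ s t : S, s * t ≠ t * s)
    (g : F) (hg : ∀ s ∈ S, g * s = s * g) : g = 1 := by
  obtain ⟨s, t, hst⟩ := hS
  let C := Subgroup.centralizer ({g} : Set F)
  have mem_C : ∀ x ∈ S, x ∈ C := fun x hx =>
    Subgroup.mem_centralizer_singleton_iff.mpr (hg x hx).symm
  have hgC : g ∈ C := Subgroup.mem_centralizer_singleton_iff.mpr rfl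
  have hg_center : (⟨g, hgC⟩ : C) ∈ Subgroup.center C := Subgroup.mem_center_iff.mpr fun x =>
    Subtype.ext (Subgroup.mem_centralizer_singleton_iff.mp x.2)
  have hst_C : ¬Commute (⟨s, mem_C s s.2⟩ : C) ⟨t, mem_C t t.2⟩ := fun h =>
    hst (Subtype.ext (congrArg Subtype.val h.eq : (s * t : F) = t * s))
  rw [IsFreeGroup.center_eq_bot hst_C, Subgroup.mem_bot] at hg_center
  exact congrArg Subtype.val hg_center
end
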